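/- For all n > 0 and every Dyck path P ∈ T_{n,0,1}, mkwd(φ_{n,0,1}(P)) = flip ∘ rev ∘ sw⁻_{1,-1}(mkwd(P)). -/

import Mathlib

inductive Letter : Type
  | N : Letter
  | E : Letter
deriving DecidableEq, Repr

/-- weight of a letter: `N` has weight `r`, `E` has weight `s`. -/
def wt (r s : ℤ) : Letter → ℤ
  | Letter.N => r
  | Letter.E => s

/-- Pair each letter of the word with its `(r,s)`-level (east-north convention),
    starting from level `l`.  With `l = 0`, the `i`-th letter `wᵢ` is paired with
    `lᵢ = l_{i-1} + wt wᵢ`. -/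
def lvls (r s : ℤ) : ℤ → List Letter → List (Letter × ℤ)
  | _, [] => []
  | l, c :: w => (c, l + wt r s c) :: lvls r s (l + wt r s c) w

/-- `negBefore k k' = true` iff level `k` is swept before (or equals) level `k'`
    in the negative sweep order `-1, -2, -3, …` then `…, 3, 2, 1, 0`. -/
def negBefore (k k' : ℤ) : Bool :=
  if k < 0 then (if k' < 0 then decide (k' ≤ k) else true)
  else (if k' < 0 then false else decide (k' ≤ k))

/-- `posBefore k k' = true` iff level `k` is swept before (or equals) level `k'`
    in the positive sweep order `0, -1, -2, …` then `…, 3, 2, 1`. -/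
def posBefore (k k' : ℤ) : Bool :=
  if k ≤ 0 then (if k' ≤ 0 then decide (k' ≤ k) else true)
  else (if k' ≤ 0 then false else decide (k' ≤ k))

/-- The negative sweep map `sw⁻_{r,s}`: levels are visited in the order
    `-1, -2, …` then `…, 2, 1, 0`, and each level is scanned right-to-left;
    implemented as a stable sort of the reversed word by the level order. -/
def sweepNeg (r s : ℤ) (w : List Letter) : List Letter :=
  (((lvls r s 0 w).reverse).mergeSort (fun p q => negBefore p.2 q.2)).map Prod.fst

/-- The positive sweep map `sw⁺_{r,s}`: levels are visited in the order
    `0, -1, -2, …` then `…, 3, 2, 1`, and each level is scanned left-to-right;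
    implemented as a stable sort of the word by the level order. -/
def sweepPos (r s : ℤ) (w : List Letter) : List Letter :=
  ((lvls r s 0 w).mergeSort (fun p q => posBefore p.2 q.2)).map Prod.fst

/-- The transposition map `flip`, interchanging `N` and `E`. -/
def flipL : Letter → Letter
  | Letter.N => Letter.E
  | Letter.E => Letter.N

/-- A word is an `(r,s)`-Dyck word iff all of its levels `lᵢ` (`i ≥ 1`) are nonnegative. -/
def IsDyckWord (r s : ℤ) (w : List Letter) : Prop :=
  ∀ p ∈ lvls r s 0 w, 0 ≤ p.2

/-- The area vector `g(P) = (g₀, …, g_{n-1})` of a Dyck word (case `k = 0`, `m = 1`):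
    `gᵢ = i - xᵢ`, where `xᵢ` is the number of east steps before the `(i+1)`-th north
    step; this is the number of complete lattice squares in the strip `i ≤ y ≤ i+1`
    lying right of the path and left of the line `x = y`. -/
def areaVec (w : List Letter) : List ℤ :=
  (List.range w.length).filterMap fun p =>
    if w[p]? = some Letter.N then
      some (((w.take p).count Letter.N : ℤ) - ((w.take p).count Letter.E : ℤ))
    else none

/-- `w` encodes a Dyck path in `T_{n,0,1}`: it goes from `(0,0)` to `(n, n)` and
    never goes strictly right of the line `x = y`. -/
def IsDyckPathWord (n : ℕ) (w : List Letter) : Prop :=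
  w.count Letter.N = n ∧ w.count Letter.E = n ∧
    ∀ j : ℕ, (w.take j).count Letter.E ≤ (w.take j).count Letter.N

/-- `σ⁽ⁱ⁾`: the subword `z⁽ⁱ⁾` of the area vector consisting of entries in
    `{i, i-1}`, with entries equal to `i` replaced by `N` and entries equal to
    `i-1` replaced by `E`. -/
def sigmaT (g : List ℤ) (i : ℕ) : List Letter :=
  (g.filter (fun x => decide ((i : ℤ) - 1 ≤ x ∧ x ≤ (i : ℤ)))).map
    (fun x => if x = (i : ℤ) then Letter.N else Letter.E)

/-- The map `φ_{n,0,1}` (as a word): the concatenation `σ⁽⁰⁾ σ⁽¹⁾ ⋯ σ⁽ᴹ⁾`, where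
    `M` is the largest index with `z⁽ᴹ⁾` nonempty (namely `1` plus the largest
    entry of the area vector). -/
def phiLoehr (w : List Letter) : List Letter :=
  let g := areaVec w
  let M := (g.foldr max 0).toNat + 1
  ((List.range (M + 1)).map (fun i => sigmaT g i)).flatten

/-!
Read the path with `N` as an up-step and `E` as a down-step, and give each step the level of its
endpoint. On a Dyck path all levels are nonnegative, so `flip ∘ rev ∘ sw⁻_{1,-1}` lists, for
`i = 0, 1, 2, …` in turn, the flipped steps ending at level `i` from left to right. The area vector
records the starting heights of the north steps, so `σ⁽ⁱ⁾` lists from left to right the up-steps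
`i → i+1` (as `N`) and `i-1 → i` (as `E`). The two level-`i` words coincide: the up-step `i → i+1`
and the down-step `i+1 → i` closing the excursion it starts occupy the same position among the
steps touching level `i`, because the path stays above `i` in between. Formally, a letter `N`
carried along while the path is strictly above level `i` commutes past each step, turning its
contribution to `σ⁽ⁱ⁾` into its contribution to level `i`; the path starts and ends at height `0`,
where the letter is absent.
-/

open List

namespace List

variable {α β : Type*}

lemma flatMap_ite_singleton (p : α → Prop) [DecidablePred p] (f : α → β) (l : List α) :
    l.flatMap (fun a => if p a then [f a] else []) = (l.filter (p ·)).map f := by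
  induction l with
  | nil => rfl
  | cons a l ih => by_cases hp : p a <;> simp [hp, ih]

lemma eq_filter_append_filter_not (p : α → Bool) {l : List α}
    (hl : l.Pairwise fun a b => p b → p a) : l = l.filter p ++ l.filter (!p ·) := by
  induction l with
  | nil => rfl
  | cons a l ih =>
    obtain ⟨ha, hl⟩ := pairwise_cons.1 hl
    by_cases hpa : p a
    · simp [hpa, ← ih hl]
    · have hnot : ∀ b ∈ l, p b = false := fun b hb => by simpa using mt (ha b hb) hpa
      have hnil : l.filter p = [] := filter_eq_nil_iff.2 fun b hb => by simp [hnot b hb]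
      have hall : l.filter (!p ·) = l := filter_eq_self.2 fun b hb => by simp [hnot b hb]
      simp [hpa, hnil, hall]

variable [DecidableEq β] {key : α → β}

lemma Pairwise.eq_flatten_map_filter {R : β → β → Prop} {l : List α}
    (hl : l.Pairwise fun a b => R (key a) (key b)) {ks : List β}
    (hks : ks.Pairwise fun k k' => ¬ R k' k) (hnd : ks.Nodup) (hmem : ∀ a ∈ l, key a ∈ ks) :
    l = (ks.map fun k => l.filter (key · = k)).flatten := by
  induction ks generalizing l with
  | nil => simp [eq_nil_iff_forall_not_mem.2 fun a ha => by simpa using hmem a ha]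
  | cons k ks ih =>
    obtain ⟨hk, hks⟩ := pairwise_cons.1 hks
    obtain ⟨hkn, hnd⟩ := nodup_cons.1 hnd
    have hfirst : l.Pairwise fun a b => key b = k → key a = k := by
      refine hl.imp_of_mem fun {a b} ha _ hab hb => ?_
      by_contra hne
      exact hk (key a) ((mem_cons.1 (hmem a ha)).resolve_left hne) (hb ▸ hab)
    have hrest : ∀ a ∈ l.filter (fun a => !Decidable.decide (key a = k)), key a ∈ ks := by
      intro a ha
      obtain ⟨ha, hne⟩ := mem_filter.1 ha
      exact (mem_cons.1 (hmem a ha)).resolve_left (by simpa using hne)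
    conv_lhs => rw [eq_filter_append_filter_not (fun a => Decidable.decide (key a = k)) (l := l)
      (by simpa using hfirst), ih (hl.filter _) hks hnd hrest]
    simp only [map_cons, flatten_cons, filter_filter]
    congr 2
    refine map_congr_left fun k' hk' => filter_congr fun a _ => ?_
    by_cases h : key a = k' <;> simp [h, ne_of_mem_of_not_mem hk' hkn]

end List

section StableSort

variable {α β : Type*} [DecidableEq β] (key : α → β) {le : β → β → Bool}
  (trans : ∀ a b c, le a b → le b c → le a c) (total : ∀ a b, le a b || le b a)
include trans total

lemma filter_mergeSort_key_eq (refl : ∀ k, le k k) (l : List α) (k : β) :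
    (l.mergeSort fun a b => le (key a) (key b)).filter (key · = k) = l.filter (key · = k) := by
  have hsorted : (l.filter (key · = k)).Pairwise fun a b => le (key a) (key b) :=
    pairwise_of_forall_mem_list fun a ha b hb => by
      rw [of_decide_eq_true (mem_filter.1 ha).2, of_decide_eq_true (mem_filter.1 hb).2]
      exact refl k
  have hsub := (sublist_mergeSort (fun a b c => trans (key a) (key b) (key c))
    (fun a b => total (key a) (key b)) hsorted filter_sublist).filter (key · = k)
  simp only [filter_filter, Bool.and_self] at hsub
  exact (hsub.eq_of_length ((mergeSort_perm l _).filter _).length_eq.symm).symm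

lemma mergeSort_eq_flatten_map_filter (refl : ∀ k, le k k) {l : List α} {ks : List β}
    (hks : ks.Pairwise fun k k' => le k' k = false) (hnd : ks.Nodup)
    (hmem : ∀ a ∈ l, key a ∈ ks) :
    l.mergeSort (fun a b => le (key a) (key b))
      = (ks.map fun k => l.filter (key · = k)).flatten := by
  have hsorted := pairwise_mergeSort (fun a b c => trans (key a) (key b) (key c))
    (fun a b => total (key a) (key b)) l
  rw [hsorted.eq_flatten_map_filter (R := fun k k' => le k k' = true) (by simpa using hks) hnd
    fun a ha => hmem a (mem_mergeSort.1 ha)]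
  simp_rw [filter_mergeSort_key_eq key trans total refl]

end StableSort

lemma negBefore_iff {k k' : ℤ} :
    negBefore k k' = true ↔ (k < 0 ∧ (k' < 0 → k' ≤ k)) ∨ (0 ≤ k' ∧ k' ≤ k) := by
  unfold negBefore
  split_ifs <;> simp <;> omega

lemma negBefore_trans (a b c : ℤ) (hab : negBefore a b) (hbc : negBefore b c) :
    negBefore a c := by
  rw [negBefore_iff] at *; omega

lemma negBefore_total (a b : ℤ) : negBefore a b || negBefore b a := by
  rw [Bool.or_eq_true, negBefore_iff, negBefore_iff]; omega

lemma negBefore_refl (a : ℤ) : negBefore a a := by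
  rw [negBefore_iff]; omega

theorem map_flipL_reverse_sweepNeg {r s : ℤ} {w : List Letter} (M : ℕ)
    (hw : ∀ p ∈ lvls r s 0 w, 0 ≤ p.2 ∧ p.2 ≤ M) :
    (sweepNeg r s w).reverse.map flipL
      = ((range (M + 1)).map fun i : ℕ =>
          ((lvls r s 0 w).filter fun p => p.2 = (i : ℤ)).map (flipL ∘ Prod.fst)).flatten := by
  have hks : ((range (M + 1)).map ((↑) : ℕ → ℤ)).reverse.Pairwise
      fun k k' => negBefore k' k = false := by
    rw [pairwise_reverse, pairwise_map]
    refine pairwise_lt_range.imp fun {i j} hij => ?_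
    rw [Bool.eq_false_iff, ne_eq, negBefore_iff]
    omega
  have hnd : ((range (M + 1)).map ((↑) : ℕ → ℤ)).reverse.Nodup :=
    nodup_reverse.2 (nodup_range.map Nat.cast_injective)
  have hmem : ∀ p ∈ (lvls r s 0 w).reverse,
      p.2 ∈ ((range (M + 1)).map ((↑) : ℕ → ℤ)).reverse := by
    intro p hp
    obtain ⟨h0, hM⟩ := hw p (mem_reverse.1 hp)
    simp only [mem_reverse, mem_map, mem_range]
    exact ⟨p.2.toNat, by omega, by omega⟩
  unfold sweepNeg
  rw [mergeSort_eq_flatten_map_filter Prod.snd negBefore_trans negBefore_total negBefore_refl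
    hks hnd hmem]
  simp [reverse_flatten, map_flatten, filter_reverse, Function.comp_def]

section Levels

variable {r s : ℤ}

lemma sum_map_wt (w : List Letter) :
    (w.map (wt r s)).sum = r * w.count .N + s * w.count .E := by
  induction w with
  | nil => simp
  | cons c w ih => cases c <;> simp [ih, wt] <;> ring

lemma exists_take_of_mem_lvls {l : ℤ} {w : List Letter} {p : Letter × ℤ}
    (hp : p ∈ lvls r s l w) : ∃ j, p.2 = l + ((w.take j).map (wt r s)).sum := by
  induction w generalizing l with
  | nil => simp [lvls] at hp
  | cons c w ih =>
    rcases mem_cons.1 hp with rfl | hp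
    · exact ⟨1, by simp⟩
    · obtain ⟨j, hj⟩ := ih hp
      exact ⟨j + 1, by simp [hj, add_assoc]⟩

lemma append_flatMap_lvls {β : Type*} (c : ℤ → List β) (f g : Letter × ℤ → List β)
    (h : ∀ l a, c l ++ f (a, l + wt r s a) = g (a, l + wt r s a) ++ c (l + wt r s a))
    (l : ℤ) (w : List Letter) :
    c l ++ (lvls r s l w).flatMap f
      = (lvls r s l w).flatMap g ++ c (l + (w.map (wt r s)).sum) := by
  induction w generalizing l with
  | nil => simp [lvls]
  | cons a w ih =>
    simp only [lvls, flatMap_cons, ← append_assoc, h, map_cons, sum_cons]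
    rw [append_assoc, ih, append_assoc, add_assoc]

end Levels

lemma areaVec_cons (c : Letter) (w : List Letter) :
    areaVec (c :: w)
      = (if c = .N then [0] else []) ++ (areaVec w).map (· + wt 1 (-1) c) := by
  unfold areaVec
  rw [length_cons, range_succ_eq_map, filterMap_cons, filterMap_map, map_filterMap]
  cases c <;> simp only [getElem?_cons_zero, Option.some.injEq, reduceCtorEq, ↓reduceIte,
    take_zero, count_nil, Nat.cast_zero, sub_self, singleton_append, nil_append, cons.injEq,
    true_and]
  all_goals
    refine filterMap_congr fun p _ => ?_
    simp only [Function.comp_apply, getElem?_cons_succ, take_succ_cons]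
    split_ifs
    · simp only [Option.map_some, Option.some.injEq, count_cons, wt, BEq.rfl, beq_iff_eq,
        reduceCtorEq, ↓reduceIte, add_zero, Nat.cast_add, Nat.cast_one]
      ring
    · rfl

lemma areaVec_map_add_eq_filterMap_lvls (l : ℤ) (w : List Letter) :
    (areaVec w).map (· + l) = (lvls 1 (-1) l w).filterMap
      fun p => if p.1 = .N then some (p.2 - 1) else none := by
  induction w generalizing l with
  | nil => rfl
  | cons c w ih =>
    rw [areaVec_cons, map_append, map_map, lvls, filterMap_cons, ← ih]
    cases c <;> simp [wt, Function.comp_def, add_comm, add_left_comm]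

lemma areaVec_eq_filterMap_lvls (w : List Letter) :
    areaVec w = (lvls 1 (-1) 0 w).filterMap
      fun p => if p.1 = .N then some (p.2 - 1) else none := by
  simpa using areaVec_map_add_eq_filterMap_lvls 0 w

lemma sigmaT_nil (i : ℕ) : sigmaT [] i = [] := rfl

lemma sigmaT_singleton (x : ℤ) (i : ℕ) :
    sigmaT [x] i = if x = i then [Letter.N] else if x + 1 = i then [Letter.E] else [] := by
  simp only [sigmaT, filter_cons, filter_nil]
  split_ifs <;> simp_all <;> omega

lemma sigmaT_append (g₁ g₂ : List ℤ) (i : ℕ) :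
    sigmaT (g₁ ++ g₂) i = sigmaT g₁ i ++ sigmaT g₂ i := by
  simp [sigmaT]

lemma sigmaT_flatMap {α : Type*} (l : List α) (h : α → List ℤ) (i : ℕ) :
    sigmaT (l.flatMap h) i = l.flatMap fun a => sigmaT (h a) i := by
  induction l with
  | nil => rfl
  | cons a l ih => rw [flatMap_cons, flatMap_cons, sigmaT_append, ih]

lemma sigmaT_eq_nil {g : List ℤ} {i : ℕ} (hg : ∀ x ∈ g, x + 1 < i) : sigmaT g i = [] := by
  simp only [sigmaT, map_eq_nil_iff, filter_eq_nil_iff, decide_eq_true_eq]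
  intro x hx
  have := hg x hx
  omega

/-- The letter `N` standing for an up-step `i → i+1` whose matching down-step is still to
come. -/
def aboveMark (i : ℕ) (l : ℤ) : List Letter := if (i : ℤ) < l then [Letter.N] else []

lemma aboveMark_append_sigmaT_step (i : ℕ) (l : ℤ) (a : Letter) :
    aboveMark i l ++ sigmaT (if a = .N then some (l + wt 1 (-1) a - 1) else none).toList i
      = (if l + wt 1 (-1) a = i then [flipL a] else []) ++ aboveMark i (l + wt 1 (-1) a) := by
  unfold aboveMark
  cases a <;> simp only [wt, reduceIte, reduceCtorEq, Option.toList_some, Option.toList_none,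
    sigmaT_nil, sigmaT_singleton, flipL, add_sub_cancel_right] <;>
    split_ifs <;> simp [*] <;> omega

theorem sigmaT_areaVec {w : List Letter} (hw : w.count .N = w.count .E) (i : ℕ) :
    sigmaT (areaVec w) i
      = ((lvls 1 (-1) 0 w).filter fun p => p.2 = (i : ℤ)).map (flipL ∘ Prod.fst) := by
  have h := append_flatMap_lvls (aboveMark i)
    (fun p => sigmaT (if p.1 = .N then some (p.2 - 1) else none).toList i)
    (fun p => if p.2 = (i : ℤ) then [flipL p.1] else []) (aboveMark_append_sigmaT_step i) 0 w
  have hend : (0 : ℤ) + (w.map (wt 1 (-1))).sum = 0 := by rw [sum_map_wt, hw]; ring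
  have hstart : aboveMark i 0 = [] := if_neg (by omega)
  rw [hend, hstart, nil_append, append_nil] at h
  rw [areaVec_eq_filterMap_lvls, filterMap_eq_flatMap_toList, sigmaT_flatMap, h,
    flatMap_ite_singleton]
  rfl

lemma lvls_snd_nonneg {w : List Letter}
    (hw : ∀ j, (w.take j).count .E ≤ (w.take j).count .N) :
    ∀ p ∈ lvls 1 (-1) 0 w, 0 ≤ p.2 := by
  intro p hp
  obtain ⟨j, hj⟩ := exists_take_of_mem_lvls hp
  rw [hj, sum_map_wt]
  have := hw j
  omega

lemma lvls_snd_le {w : List Letter} (hw : w.count .N = w.count .E) :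
    ∀ p ∈ lvls 1 (-1) 0 w, p.2 ≤ ((areaVec w).foldr max 0).toNat + 1 := by
  intro p hp
  -- a step ending at a level `i > M` would make `σ⁽ⁱ⁾` nonempty, although every entry of the
  -- area vector is at most `M - 1`
  by_contra! hlt
  have hi : ((p.2.toNat : ℕ) : ℤ) = p.2 := Int.toNat_of_nonneg (by omega)
  have hnil : sigmaT (areaVec w) p.2.toNat = [] := sigmaT_eq_nil fun x hx => by
    have := le_max_of_le' 0 hx le_rfl
    have := Int.self_le_toNat ((areaVec w).foldr max 0)
    omega
  rw [sigmaT_areaVec hw, map_eq_nil_iff, filter_eq_nil_iff] at hnil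
  exact hnil p hp (by simp [hi])

theorem phiLoehr_eq_sweep_general (n : ℕ)
    (w : List Letter) (hw : IsDyckPathWord n w) :
    phiLoehr w = ((sweepNeg 1 (-1) w).reverse).map flipL := by
  obtain ⟨hN, hE, hprefix⟩ := hw
  have hbal : w.count .N = w.count .E := hN.trans hE.symm
  rw [map_flipL_reverse_sweepNeg _ fun p hp =>
    ⟨lvls_snd_nonneg hprefix p hp, lvls_snd_le hbal p hp⟩]
  exact congrArg flatten (map_congr_left fun i _ => sigmaT_areaVec hbal i)

/-- For all `n > 0` and every Dyck path `P ∈ T_{n,0,1}`,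
    `mkwd(φ_{n,0,1}(P)) = flip ∘ rev ∘ sw⁻_{1,-1}(mkwd(P))`. -/
theorem phiLoehr_eq_sweep (n : ℕ) (hn : 0 < n)
    (w : List Letter) (hw : IsDyckPathWord n w) :
    phiLoehr w = ((sweepNeg 1 (-1) w).reverse).map flipL :=
  phiLoehr_eq_sweep_general n w hw
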